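/- arXiv:1204.5967 — 7 statements merged into one kernel-verified Lean document; each statement's English description precedes it below -/
import Mathlib

section
/- Let φ : ℝ → ℝ be smooth with φ > 0, φ_r > 0, and suppose at r₀ we have a critical point of F = φ_r/φ, i.e., F_r(r₀) = 0 and F_{rr}(r₀) ≤ 0. If φ evolves by φ_t = φ_{rr}/φ_r + φ_r/φ − 2, then the evolution of F satisfies F_t(r₀) ≤ (2/φ(r₀))·F(r₀)·(1 − F(r₀)). In particular, if F(r₀) > 1 then F_t(r₀) < 0. -/
/-- Partial derivative in the first (spatial) variable. -/
noncomputable def phiR (φ : ℝ → ℝ → ℝ) (r t : ℝ) : ℝ := deriv (fun x => φ x t) r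
/-- Second spatial partial derivative. -/
noncomputable def phiRR (φ : ℝ → ℝ → ℝ) (r t : ℝ) : ℝ := deriv (fun x => phiR φ x t) r
/-- Partial derivative in time. -/
noncomputable def phiT (φ : ℝ → ℝ → ℝ) (r t : ℝ) : ℝ := deriv (fun s => φ r s) t
/-- F = φ_r / φ. -/
noncomputable def Ffun (φ : ℝ → ℝ → ℝ) (r t : ℝ) : ℝ := phiR φ r t / φ r t
/-- Time derivative of F. -/
noncomputable def Ft (φ : ℝ → ℝ → ℝ) (r t : ℝ) : ℝ := deriv (fun s => Ffun φ r s) t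
/-- Spatial derivative of F. -/
noncomputable def Fr (φ : ℝ → ℝ → ℝ) (r t : ℝ) : ℝ := deriv (fun x => Ffun φ x t) r
/-- Second spatial derivative of F. -/
noncomputable def Frr (φ : ℝ → ℝ → ℝ) (r t : ℝ) : ℝ := deriv (fun x => Fr φ x t) r

private lemma slice1 {f : ℝ × ℝ → ℝ} (hf : Differentiable ℝ f) (r t : ℝ) :
    HasDerivAt (fun x => f (x, t)) (fderiv ℝ f (r, t) (1, 0)) r := by
  have h1 : HasDerivAt (fun x : ℝ => ((x, t) : ℝ × ℝ)) (1, 0) r :=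
    (hasDerivAt_id r).prodMk (hasDerivAt_const r t)
  exact ((hf (r, t)).hasFDerivAt).comp_hasDerivAt r h1

private lemma slice2 {f : ℝ × ℝ → ℝ} (hf : Differentiable ℝ f) (r t : ℝ) :
    HasDerivAt (fun s => f (r, s)) (fderiv ℝ f (r, t) (0, 1)) t := by
  have h1 : HasDerivAt (fun s : ℝ => ((r, s) : ℝ × ℝ)) (0, 1) t :=
    (hasDerivAt_const t r).prodMk (hasDerivAt_id t)
  exact ((hf (r, t)).hasFDerivAt).comp_hasDerivAt t h1

private lemma smooth_pd {f : ℝ × ℝ → ℝ} (hf : ContDiff ℝ (⊤ : ℕ∞) f) (v : ℝ × ℝ) :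
    ContDiff ℝ (⊤ : ℕ∞) (fun p => fderiv ℝ f p v) :=
  (ContinuousLinearMap.apply ℝ ℝ v).contDiff.comp (hf.fderiv_right (by simp))

private lemma pd_fderiv {f : ℝ × ℝ → ℝ} (hf : ContDiff ℝ (⊤ : ℕ∞) f) (v w p : ℝ × ℝ) :
    fderiv ℝ (fun q => fderiv ℝ f q v) p w = fderiv ℝ (fderiv ℝ f) p w v := by
  have hd : HasFDerivAt (fderiv ℝ f) (fderiv ℝ (fderiv ℝ f) p) p :=
    ((hf.fderiv_right (m := 1) ((WithTop.coe_le_coe.mpr le_top))).differentiable one_ne_zero p).hasFDerivAt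
  have h2 : (fun q => fderiv ℝ f q v) = (⇑(ContinuousLinearMap.apply ℝ ℝ v) ∘ fderiv ℝ f) := rfl
  rw [h2, ((ContinuousLinearMap.apply ℝ ℝ v).hasFDerivAt.comp p hd).fderiv]; rfl

private lemma pd_symm {f : ℝ × ℝ → ℝ} (hf : ContDiff ℝ (⊤ : ℕ∞) f) (v w p : ℝ × ℝ) :
    fderiv ℝ (fun q => fderiv ℝ f q v) p w = fderiv ℝ (fun q => fderiv ℝ f q w) p v := by
  rw [pd_fderiv hf, pd_fderiv hf]
  have hd : HasFDerivAt (fderiv ℝ f) (fderiv ℝ (fderiv ℝ f) p) p :=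
    ((hf.fderiv_right (m := 1) ((WithTop.coe_le_coe.mpr le_top))).differentiable one_ne_zero p).hasFDerivAt
  exact second_derivative_symmetric (fun y => ((hf.differentiable (by simp) y).hasFDerivAt)) hd w v

theorem stmt1 (φ : ℝ → ℝ → ℝ) (hφ : ContDiff ℝ (⊤ : ℕ∞) (Function.uncurry φ))
    (hpos : ∀ r t, 0 < φ r t) (hr : ∀ r t, 0 < phiR φ r t)
    (heq : ∀ r t, phiT φ r t = phiRR φ r t / phiR φ r t + phiR φ r t / φ r t - 2)
    (r₀ t₀ : ℝ) (hcrit : Fr φ r₀ t₀ = 0) (hmax : Frr φ r₀ t₀ ≤ 0) :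
    Ft φ r₀ t₀ ≤ 2 / φ r₀ t₀ * Ffun φ r₀ t₀ * (1 - Ffun φ r₀ t₀) ∧
      (1 < Ffun φ r₀ t₀ → Ft φ r₀ t₀ < 0) := by
  classical
  have hf : ContDiff ℝ (⊤ : ℕ∞) (Function.uncurry φ) := hφ
  let f : ℝ × ℝ → ℝ := Function.uncurry φ
  have hfd : Differentiable ℝ f := hf.differentiable (by simp)
  let g : ℝ × ℝ → ℝ := fun p => fderiv ℝ f p (1, 0)
  have hgc : ContDiff ℝ (⊤ : ℕ∞) g := smooth_pd hf (1, 0)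
  have hgd : Differentiable ℝ g := hgc.differentiable (by simp)
  let G : ℝ × ℝ → ℝ := fun p => fderiv ℝ g p (1, 0)
  have hGc : ContDiff ℝ (⊤ : ℕ∞) G := smooth_pd hgc (1, 0)
  have hGd : Differentiable ℝ G := hGc.differentiable (by simp)
  let h : ℝ × ℝ → ℝ := fun p => fderiv ℝ f p (0, 1)
  have hhd : Differentiable ℝ h := (smooth_pd hf (0, 1)).differentiable (by simp)
  -- identification of the partial derivatives
  have hphiR : ∀ r t, phiR φ r t = g (r, t) := fun r t => (slice1 hfd r t).deriv
  have hphiT : ∀ r t, phiT φ r t = h (r, t) := fun r t => (slice2 hfd r t).deriv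
  have hphiRR : ∀ r t, phiRR φ r t = G (r, t) := by
    intro r t
    have h1 : (fun x => phiR φ x t) = fun x => g (x, t) := funext fun x => hphiR x t
    show deriv (fun x => phiR φ x t) r = G (r, t)
    rw [h1]; exact (slice1 hgd r t).deriv
  -- abbreviations at the point
  set a : ℝ := f (r₀, t₀) with hadef
  set b : ℝ := g (r₀, t₀) with hbdef
  set c : ℝ := G (r₀, t₀) with hcdef
  set d : ℝ := fderiv ℝ G (r₀, t₀) (1, 0) with hddef
  have ha : 0 < a := hpos r₀ t₀
  have hb : 0 < b := by have := hr r₀ t₀; rwa [hphiR] at this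
  have hbx : ∀ x, 0 < g (x, t₀) := by intro x; have := hr x t₀; rwa [hphiR] at this
  have hax : ∀ x, 0 < f (x, t₀) := fun x => hpos x t₀
  -- Fr as a function of x
  have hFrf : ∀ x, Fr φ x t₀ =
      (G (x, t₀) * f (x, t₀) - g (x, t₀) * g (x, t₀)) / f (x, t₀) ^ 2 := by
    intro x
    have h1 : (fun y => Ffun φ y t₀) = fun y => g (y, t₀) / f (y, t₀) := by
      funext y; show phiR φ y t₀ / φ y t₀ = _; rw [hphiR]; rfl
    show deriv (fun y => Ffun φ y t₀) x = _
    rw [h1]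
    exact ((slice1 hgd x t₀).div (slice1 hfd x t₀) (hax x).ne').deriv
  -- critical point
  have hcab : c * a = b * b := by
    rw [hFrf r₀] at hcrit
    have := (div_eq_zero_iff.mp hcrit).resolve_right (by positivity)
    linarith
  -- second derivative
  have hFrr : Frr φ r₀ t₀ =
      ((d * a + c * b - (c * b + b * c)) * a ^ 2 - (c * a - b * b) * (2 * a ^ 1 * b)) /
        (a ^ 2) ^ 2 := by
    have h1 : (fun x => Fr φ x t₀) =
        fun x => (G (x, t₀) * f (x, t₀) - g (x, t₀) * g (x, t₀)) / f (x, t₀) ^ 2 :=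
      funext hFrf
    show deriv (fun x => Fr φ x t₀) r₀ = _
    rw [h1]
    exact ((((slice1 hGd r₀ t₀).mul (slice1 hfd r₀ t₀)).sub
      ((slice1 hgd r₀ t₀).mul (slice1 hgd r₀ t₀))).div
      ((slice1 hfd r₀ t₀).pow 2) (pow_pos ha 2).ne').deriv
  have hdle : d * a ≤ b * c := by
    rw [hFrr] at hmax
    have h4 : (0 : ℝ) < (a ^ 2) ^ 2 := by positivity
    have hN : (d * a + c * b - (c * b + b * c)) * a ^ 2 - (c * a - b * b) * (2 * a ^ 1 * b) ≤ 0 := by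
      by_contra hcon
      push_neg at hcon
      have := div_pos hcon h4
      linarith
    have hz : c * a - b * b = 0 := by linarith
    have h7 : (d * a - b * c) * a ^ 2 ≤ 0 := by
      calc (d * a - b * c) * a ^ 2
          = (d * a + c * b - (c * b + b * c)) * a ^ 2 - (c * a - b * b) * (2 * a ^ 1 * b) := by
            rw [hz]; ring
        _ ≤ 0 := hN
    nlinarith [h7, pow_pos ha 2]
  -- time derivative of phiR via symmetry of second derivatives
  have hmixed : fderiv ℝ g (r₀, t₀) (0, 1) = fderiv ℝ h (r₀, t₀) (1, 0) :=
    pd_symm hf (1, 0) (0, 1) (r₀, t₀)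
  have hhr : fderiv ℝ h (r₀, t₀) (1, 0) =
      (d * b - c * c) / b ^ 2 + (c * a - b * b) / a ^ 2 - 0 := by
    have h1 : (fun x => h (x, t₀)) =
        fun x => G (x, t₀) / g (x, t₀) + g (x, t₀) / f (x, t₀) - 2 := by
      funext x
      have h2 := heq x t₀
      rw [hphiT, hphiRR, hphiR] at h2
      exact h2
    have h3 := slice1 hhd r₀ t₀
    rw [h1] at h3
    have h4 : HasDerivAt (fun x => G (x, t₀) / g (x, t₀) + g (x, t₀) / f (x, t₀) - 2)
        ((d * b - c * c) / b ^ 2 + (c * a - b * b) / a ^ 2 - 0) r₀ :=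
      (((slice1 hGd r₀ t₀).div (slice1 hgd r₀ t₀) (hbx r₀).ne').add
        ((slice1 hgd r₀ t₀).div (slice1 hfd r₀ t₀) (hax r₀).ne')).sub (hasDerivAt_const r₀ 2)
    exact h3.unique h4
  -- value of phiT at the point
  have hpt : h (r₀, t₀) = c / b + b / a - 2 := by
    have h2 := heq r₀ t₀
    rw [hphiT, hphiRR, hphiR] at h2
    exact h2
  -- compute Ft
  have hFt : Ft φ r₀ t₀ = (fderiv ℝ g (r₀, t₀) (0, 1) * a - b * h (r₀, t₀)) / a ^ 2 := by
    have h1 : (fun s => Ffun φ r₀ s) = fun s => g (r₀, s) / f (r₀, s) := by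
      funext s; show phiR φ r₀ s / φ r₀ s = _; rw [hphiR]; rfl
    show deriv (fun s => Ffun φ r₀ s) t₀ = _
    rw [h1]
    exact ((slice2 hgd r₀ t₀).div (slice2 hfd r₀ t₀) ha.ne').deriv
  have hgt : fderiv ℝ g (r₀, t₀) (0, 1) ≤ 0 := by
    rw [hmixed, hhr]
    have h5 : c * a - b * b = 0 := by linarith
    have h6 : d * b - c * c ≤ 0 := by
      have h8 : d * a * b ≤ b * c * b := mul_le_mul_of_nonneg_right hdle hb.le
      have h9 : b * c * b = c * c * a := by
        calc b * c * b = c * (b * b) := by ring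
          _ = c * (c * a) := by rw [hcab]
          _ = c * c * a := by ring
      have h10 : d * b * a ≤ c * c * a := by nlinarith [h8, h9]
      have h11 : d * b ≤ c * c := le_of_mul_le_mul_right h10 ha
      linarith
    rw [h5]
    have : (d * b - c * c) / b ^ 2 ≤ 0 := div_nonpos_of_nonpos_of_nonneg h6 (by positivity)
    simp only [zero_div]
    linarith
  have hF : Ffun φ r₀ t₀ = b / a := by
    show phiR φ r₀ t₀ / φ r₀ t₀ = b / a
    rw [hphiR]; rfl
  have hptv : h (r₀, t₀) = 2 * (b / a) - 2 := by
    rw [hpt]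
    have hcb : c / b = b / a := by
      rw [div_eq_div_iff hb.ne' ha.ne']; linarith
    rw [hcb]; ring
  have hmain : Ft φ r₀ t₀ ≤ 2 / a * (b / a) * (1 - b / a) := by
    rw [hFt, hptv]
    have hRHS : 2 / a * (b / a) * (1 - b / a) = (0 - b * (2 * (b / a) - 2)) / a ^ 2 := by
      field_simp; ring
    rw [hRHS]
    have hnum : fderiv ℝ g (r₀, t₀) (0, 1) * a - b * (2 * (b / a) - 2) ≤
        0 - b * (2 * (b / a) - 2) := by
      have := mul_nonpos_of_nonpos_of_nonneg hgt ha.le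
      linarith
    gcongr
  have hgoalF : (2 : ℝ) / φ r₀ t₀ * Ffun φ r₀ t₀ * (1 - Ffun φ r₀ t₀) =
      2 / a * (b / a) * (1 - b / a) := by rw [hF]; rfl
  constructor
  · rw [hgoalF]; exact hmain
  · intro h1
    rw [hF] at h1
    have : 2 / a * (b / a) * (1 - b / a) < 0 := by
      apply mul_neg_of_pos_of_neg
      · positivity
      · linarith
    calc Ft φ r₀ t₀ ≤ _ := hmain
      _ < 0 := this
end

section
/- Define 𝒴(φ) = (φ(φ−2) + √2(φ−1) + 1)/(√2·φ) for φ > 0. Then 𝒴 satisfies the stationary equation 𝒴·𝒴'' + (2 − φ − 𝒴')·𝒴' + 𝒴·(1 − 𝒴/φ²) = 0 for all φ > 0. -/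
/-!
Every profile `a φ + b + c / φ` turns the stationary residual into
`(2a - 2a² + b) + 2(c - ab)/φ + (2ac - 2c - b²)/φ²`, which vanishes along the one-parameter
family `b = 2a(a - 1)`, `c = ab`. Away from `φ = 0` the FIK profile is the member `a = √2/2`.
-/

open Filter Topology

/-- The FIK soliton profile in the variables y(φ) = φ_ρ. -/
noncomputable def Yfik (x : ℝ) : ℝ :=
  (x * (x - 2) + Real.sqrt 2 * (x - 1) + 1) / (Real.sqrt 2 * x)

noncomputable def stationaryResidual (y : ℝ → ℝ) (x : ℝ) : ℝ :=
  y x * deriv (deriv y) x + (2 - x - deriv y x) * deriv y x + y x * (1 - y x / x ^ 2)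

lemma stationaryResidual_congr {y z : ℝ → ℝ} {x : ℝ} (h : y =ᶠ[𝓝 x] z) :
    stationaryResidual y x = stationaryResidual z x := by
  simp only [stationaryResidual, h.eq_of_nhds, h.deriv.eq_of_nhds, h.deriv.deriv_eq]

noncomputable def linAddInv (a b c x : ℝ) : ℝ := a * x + b + c / x

section linAddInv

variable (a b c : ℝ) {x : ℝ}

lemma hasDerivAt_linAddInv (hx : x ≠ 0) :
    HasDerivAt (linAddInv a b c) (a - c / x ^ 2) x := by
  have h := (((hasDerivAt_id x).const_mul a).add_const b).add ((hasDerivAt_inv hx).const_mul c)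
  refine (h.congr_deriv (by ring)).congr_of_eventuallyEq (.of_forall fun y => ?_)
  simp only [linAddInv, Pi.add_apply, id, div_eq_mul_inv]

lemma deriv_deriv_linAddInv (hx : x ≠ 0) :
    deriv (deriv (linAddInv a b c)) x = 2 * c / x ^ 3 := by
  have hderiv : deriv (linAddInv a b c) =ᶠ[𝓝 x] fun y => a - c * (y ^ 2)⁻¹ := by
    filter_upwards [eventually_ne_nhds hx] with y hy
    rw [(hasDerivAt_linAddInv a b c hy).deriv, div_eq_mul_inv]
  have h := (((hasDerivAt_pow 2 x).inv (pow_ne_zero 2 hx)).const_mul c).const_sub a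
  rw [hderiv.deriv_eq]
  exact h.deriv.trans (by field_simp; ring)

lemma stationaryResidual_linAddInv (hx : x ≠ 0) :
    stationaryResidual (linAddInv a b c) x =
      (2 * a - 2 * a ^ 2 + b) + 2 * (c - a * b) / x + (2 * a * c - 2 * c - b ^ 2) / x ^ 2 := by
  rw [stationaryResidual, deriv_deriv_linAddInv a b c hx, (hasDerivAt_linAddInv a b c hx).deriv,
    linAddInv]
  field_simp
  ring

lemma stationaryResidual_linAddInv_eq_zero (hx : x ≠ 0) :
    stationaryResidual (linAddInv a (2 * a * (a - 1)) (2 * a ^ 2 * (a - 1))) x = 0 := by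
  rw [stationaryResidual_linAddInv _ _ _ hx]
  ring

end linAddInv

lemma Yfik_eventuallyEq_linAddInv {x : ℝ} (hx : x ≠ 0) :
    Yfik =ᶠ[𝓝 x]
      linAddInv (√2 / 2) (2 * (√2 / 2) * (√2 / 2 - 1)) (2 * (√2 / 2) ^ 2 * (√2 / 2 - 1)) := by
  have hsq : √2 ^ 2 = 2 := Real.sq_sqrt zero_le_two
  filter_upwards [eventually_ne_nhds hx] with y hy
  rw [Yfik, linAddInv]
  field_simp
  linear_combination (-2 * y ^ 2 + (4 - 2 * √2) * y - √2 ^ 2 + 2 * √2 - 2) * hsq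

theorem stmt3 : ∀ x : ℝ, 0 < x →
    Yfik x * deriv (deriv Yfik) x + (2 - x - deriv Yfik x) * deriv Yfik x
      + Yfik x * (1 - Yfik x / x ^ 2) = 0 := by
  intro x hx
  change stationaryResidual Yfik x = 0
  rw [stationaryResidual_congr (Yfik_eventuallyEq_linAddInv hx.ne')]
  exact stationaryResidual_linAddInv_eq_zero _ hx.ne'
end

section
/- Suppose y(φ,τ) evolves by ∂_τ y = y·y_{φφ} + (2 − φ − y_φ)y_φ + y(1 − y/φ²) with y > 0 in the interior, and at an interior point φ₀ the derivative y_φ has a negative local spatial minimum, i.e., y_φ(φ₀) < 0, y_{φφ}(φ₀) = 0, y_{φφφ}(φ₀) ≥ 0. Then ∂_τ(y_φ)(φ₀) > 0. -/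
/-- First spatial partial derivative y_φ. -/
noncomputable def yP (y : ℝ → ℝ → ℝ) (x t : ℝ) : ℝ := deriv (fun s => y s t) x
/-- Second spatial partial derivative y_φφ. -/
noncomputable def yPP (y : ℝ → ℝ → ℝ) (x t : ℝ) : ℝ := deriv (fun s => yP y s t) x
/-- Third spatial partial derivative y_φφφ. -/
noncomputable def yPPP (y : ℝ → ℝ → ℝ) (x t : ℝ) : ℝ := deriv (fun s => yPP y s t) x
/-- Time partial derivative y_τ. -/
noncomputable def yT (y : ℝ → ℝ → ℝ) (x t : ℝ) : ℝ := deriv (fun s => y x s) t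

theorem stmt6 (y : ℝ → ℝ → ℝ) (hy : ContDiff ℝ (⊤ : ℕ∞) (Function.uncurry y))
    (hpos : ∀ x : ℝ, 0 < x → ∀ t : ℝ, 0 < y x t)
    (hevol : ∀ x : ℝ, 0 < x → ∀ t : ℝ,
      yT y x t = y x t * yPP y x t + (2 - x - yP y x t) * yP y x t
        + y x t * (1 - y x t / x ^ 2))
    (φ₀ τ₀ : ℝ) (hφ₀ : 0 < φ₀)
    (hmin : yP y φ₀ τ₀ < 0) (hflat : yPP y φ₀ τ₀ = 0) (hconv : 0 ≤ yPPP y φ₀ τ₀) :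
    0 < deriv (fun s => yP y φ₀ s) τ₀ := by
  set F : ℝ × ℝ → ℝ := Function.uncurry y with hF
  have hFd : Differentiable ℝ F := hy.differentiable (by simp)
  set G : ℝ × ℝ → (ℝ × ℝ →L[ℝ] ℝ) := fderiv ℝ F with hG
  have hGc : ContDiff ℝ (⊤ : ℕ∞) G := hy.fderiv_right (by simp)
  have hGd : Differentiable ℝ G := hGc.differentiable (by simp)
  -- partial derivatives via fderiv
  have h1 : ∀ x t : ℝ, yP y x t = G (x, t) (1, 0) := by
    intro x t
    have hline : HasDerivAt (fun s : ℝ => (s, t)) ((1 : ℝ), (0 : ℝ)) x :=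
      (hasDerivAt_id x).prodMk (hasDerivAt_const x t)
    have := (hFd (x, t)).hasFDerivAt.comp_hasDerivAt x hline
    exact this.deriv
  have h2 : ∀ x t : ℝ, yT y x t = G (x, t) (0, 1) := by
    intro x t
    have hline : HasDerivAt (fun s : ℝ => (x, s)) ((0 : ℝ), (1 : ℝ)) t :=
      (hasDerivAt_const t x).prodMk (hasDerivAt_id t)
    have := (hFd (x, t)).hasFDerivAt.comp_hasDerivAt t hline
    exact this.deriv
  -- LHS as a second fderiv
  have hLHS : HasDerivAt (fun s => yP y φ₀ s)
      (fderiv ℝ G (φ₀, τ₀) (0, 1) (1, 0)) τ₀ := by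
    have hline : HasDerivAt (fun s : ℝ => (φ₀, s)) ((0 : ℝ), (1 : ℝ)) τ₀ :=
      (hasDerivAt_const τ₀ φ₀).prodMk (hasDerivAt_id τ₀)
    have hc : HasDerivAt (fun s => G (φ₀, s)) (fderiv ℝ G (φ₀, τ₀) (0, 1)) τ₀ :=
      (hGd (φ₀, τ₀)).hasFDerivAt.comp_hasDerivAt τ₀ hline
    have := hc.clm_apply (hasDerivAt_const τ₀ ((1 : ℝ), (0 : ℝ)))
    simp only [map_zero, add_zero] at this
    refine this.congr_of_eventuallyEq ?_
    filter_upwards with s using (h1 φ₀ s)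
  -- RHS as a second fderiv
  have hRHS : HasDerivAt (fun x => yT y x τ₀)
      (fderiv ℝ G (φ₀, τ₀) (1, 0) (0, 1)) φ₀ := by
    have hline : HasDerivAt (fun x : ℝ => (x, τ₀)) ((1 : ℝ), (0 : ℝ)) φ₀ :=
      (hasDerivAt_id φ₀).prodMk (hasDerivAt_const φ₀ τ₀)
    have hc : HasDerivAt (fun x => G (x, τ₀)) (fderiv ℝ G (φ₀, τ₀) (1, 0)) φ₀ :=
      (hGd (φ₀, τ₀)).hasFDerivAt.comp_hasDerivAt φ₀ hline
    have := hc.clm_apply (hasDerivAt_const φ₀ ((0 : ℝ), (1 : ℝ)))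
    simp only [map_zero, add_zero] at this
    refine this.congr_of_eventuallyEq ?_
    filter_upwards with x using (h2 x τ₀)
  have hsymm : fderiv ℝ G (φ₀, τ₀) (0, 1) (1, 0) = fderiv ℝ G (φ₀, τ₀) (1, 0) (0, 1) :=
    second_derivative_symmetric (fun z => (hFd z).hasFDerivAt)
      ((hGd (φ₀, τ₀)).hasFDerivAt) _ _
  -- one-variable analysis at time τ₀
  set g : ℝ → ℝ := fun s => y s τ₀ with hg
  have hgc : ContDiff ℝ (⊤ : ℕ∞) g := hy.comp (contDiff_id.prodMk contDiff_const)
  have hgd : Differentiable ℝ g := hgc.differentiable (by simp)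
  have hgc' : ContDiff ℝ ((⊤ : ℕ∞) : WithTop ℕ∞) g := hgc.of_le (by simp)
  have hd1c : ContDiff ℝ ((⊤ : ℕ∞) : WithTop ℕ∞) (deriv g) :=
    (contDiff_infty_iff_deriv.mp hgc').2
  have hd2c : ContDiff ℝ ((⊤ : ℕ∞) : WithTop ℕ∞) (deriv (deriv g)) :=
    (contDiff_infty_iff_deriv.mp hd1c).2
  have Hg : HasDerivAt g (deriv g φ₀) φ₀ := (hgd φ₀).hasDerivAt
  have Hd1 : HasDerivAt (deriv g) (deriv (deriv g) φ₀) φ₀ :=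
    (hd1c.differentiable (by simp) φ₀).hasDerivAt
  have Hd2 : HasDerivAt (deriv (deriv g)) (deriv (deriv (deriv g)) φ₀) φ₀ :=
    (hd2c.differentiable (by simp) φ₀).hasDerivAt
  -- identify yP/yPP/yPPP with iterated derivs of g
  have eP : yP y φ₀ τ₀ = deriv g φ₀ := rfl
  have ePP : yPP y φ₀ τ₀ = deriv (deriv g) φ₀ := rfl
  have ePPP : yPPP y φ₀ τ₀ = deriv (deriv (deriv g)) φ₀ := rfl
  set a := g φ₀ with ha
  set b := deriv g φ₀ with hb
  set c := deriv (deriv g) φ₀ with hc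
  set e := deriv (deriv (deriv g)) φ₀ with he
  have hapos : 0 < a := hpos φ₀ hφ₀ τ₀
  have hbneg : b < 0 := hmin
  have hc0 : c = 0 := hflat
  have he0 : 0 ≤ e := hconv
  -- derivative of the PDE right-hand side at φ₀
  have hsq : HasDerivAt (fun x : ℝ => x ^ 2) (2 * φ₀ ^ 1) φ₀ := hasDerivAt_pow 2 φ₀
  have hdiv : HasDerivAt (fun x => g x / x ^ 2)
      ((b * φ₀ ^ 2 - a * (2 * φ₀ ^ 1)) / (φ₀ ^ 2) ^ 2) φ₀ :=
    Hg.div hsq (by positivity)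
  have hterm1 : HasDerivAt (fun x => g x * deriv (deriv g) x) (b * c + a * e) φ₀ :=
    Hg.mul Hd2
  have hterm2 : HasDerivAt (fun x => (2 - x - deriv g x) * deriv g x)
      ((0 - 1 - c) * b + (2 - φ₀ - b) * c) φ₀ :=
    (((hasDerivAt_const φ₀ (2 : ℝ)).sub (hasDerivAt_id φ₀)).sub Hd1).mul Hd1
  have hterm3 : HasDerivAt (fun x => g x * (1 - g x / x ^ 2))
      (b * (1 - a / φ₀ ^ 2) + a * (0 - (b * φ₀ ^ 2 - a * (2 * φ₀ ^ 1)) / (φ₀ ^ 2) ^ 2)) φ₀ :=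
    Hg.mul ((hasDerivAt_const φ₀ (1 : ℝ)).sub hdiv)
  have hRHSfun : HasDerivAt
      (fun x => g x * deriv (deriv g) x + (2 - x - deriv g x) * deriv g x
        + g x * (1 - g x / x ^ 2))
      ((b * c + a * e) + ((0 - 1 - c) * b + (2 - φ₀ - b) * c)
        + (b * (1 - a / φ₀ ^ 2) + a * (0 - (b * φ₀ ^ 2 - a * (2 * φ₀ ^ 1)) / (φ₀ ^ 2) ^ 2))) φ₀ :=
    (hterm1.add hterm2).add hterm3
  -- yT agrees with the RHS near φ₀
  have heq : (fun x => yT y x τ₀) =ᶠ[nhds φ₀]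
      (fun x => g x * deriv (deriv g) x + (2 - x - deriv g x) * deriv g x
        + g x * (1 - g x / x ^ 2)) := by
    filter_upwards [Ioi_mem_nhds hφ₀] with x hx
    exact hevol x hx τ₀
  have hRHS' : HasDerivAt (fun x => yT y x τ₀)
      ((b * c + a * e) + ((0 - 1 - c) * b + (2 - φ₀ - b) * c)
        + (b * (1 - a / φ₀ ^ 2) + a * (0 - (b * φ₀ ^ 2 - a * (2 * φ₀ ^ 1)) / (φ₀ ^ 2) ^ 2))) φ₀ :=
    hRHSfun.congr_of_eventuallyEq heq
  have hkey : deriv (fun s => yP y φ₀ s) τ₀ =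
      (b * c + a * e) + ((0 - 1 - c) * b + (2 - φ₀ - b) * c)
        + (b * (1 - a / φ₀ ^ 2) + a * (0 - (b * φ₀ ^ 2 - a * (2 * φ₀ ^ 1)) / (φ₀ ^ 2) ^ 2)) := by
    rw [hLHS.deriv, hsymm, ← hRHS.deriv, hRHS'.deriv]
  rw [hkey, hc0]
  have hφ2 : (0:ℝ) < φ₀ ^ 2 := by positivity
  have h2term : 0 ≤ a * e := mul_nonneg hapos.le he0
  have nab : 0 < a * (-b) := mul_pos hapos (neg_pos.mpr hbneg)
  have hp3 : (0:ℝ) < φ₀ ^ 2 * (φ₀ ^ 2) ^ 2 := by positivity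
  have hp22 : (0:ℝ) < (φ₀ ^ 2) ^ 2 := by positivity
  field_simp
  nlinarith [mul_pos nab hp3, mul_pos nab (mul_pos hφ2 hφ2),
    mul_nonneg h2term hp3.le,
    mul_pos (mul_pos (mul_pos hapos hapos) hφ₀) hp22,
    mul_pos (mul_pos (mul_pos hapos hapos) hφ₀) (mul_pos hφ2 hφ2)]
end

section
/- Suppose y(φ,τ) > 0 evolves by ∂_τ y = y·y_{φφ} + (2 − φ − y_φ)y_φ + y(1 − y/φ²), with y/φ ≤ C for a constant C > 0, and at an interior point φ₀ the derivative y_φ has a local spatial maximum with y_φ(φ₀) > C, i.e., y_{φφ}(φ₀) = 0 and y_{φφφ}(φ₀) ≤ 0. Then ∂_τ(y_φ)(φ₀) < 0. -/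
open scoped ContDiff

theorem stmt7 (y : ℝ → ℝ → ℝ) (hy : ContDiff ℝ (⊤ : ℕ∞) (Function.uncurry y))
    (C : ℝ) (hC : 0 < C)
    (hpos : ∀ x : ℝ, 0 < x → ∀ t : ℝ, 0 < y x t)
    (hbd : ∀ x : ℝ, 0 < x → ∀ t : ℝ, y x t / x ≤ C)
    (hevol : ∀ x : ℝ, 0 < x → ∀ t : ℝ,
      yT y x t = y x t * yPP y x t + (2 - x - yP y x t) * yP y x t
        + y x t * (1 - y x t / x ^ 2))
    (φ₀ τ₀ : ℝ) (hφ₀ : 0 < φ₀)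
    (hmax : C < yP y φ₀ τ₀) (hflat : yPP y φ₀ τ₀ = 0) (hconc : yPPP y φ₀ τ₀ ≤ 0) :
    deriv (fun s => yP y φ₀ s) τ₀ < 0 := by
  set g := Function.uncurry y with hg
  have hgdiff : Differentiable ℝ g := hy.differentiable (by simp)
  have hfd : ContDiff ℝ (⊤ : ℕ∞) (fderiv ℝ g) := hy.fderiv_right (by simp)
  have hfddiff : Differentiable ℝ (fderiv ℝ g) := hfd.differentiable (by simp)
  -- partial derivative identities
  have lineP : ∀ (t x : ℝ), HasDerivAt (fun s : ℝ => (s, t)) ((1:ℝ), (0:ℝ)) x :=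
    fun t x => (hasDerivAt_id x).prodMk (hasDerivAt_const x t)
  have lineT : ∀ (x t : ℝ), HasDerivAt (fun s : ℝ => (x, s)) ((0:ℝ), (1:ℝ)) t :=
    fun x t => (hasDerivAt_const t x).prodMk (hasDerivAt_id t)
  have hPd : ∀ x t : ℝ, HasDerivAt (fun s => y s t) (fderiv ℝ g (x, t) (1, 0)) x := by
    intro x t
    exact ((hgdiff (x, t)).hasFDerivAt).comp_hasDerivAt x (lineP t x)
  have hTd : ∀ x t : ℝ, HasDerivAt (fun s => y x s) (fderiv ℝ g (x, t) (0, 1)) t := by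
    intro x t
    exact ((hgdiff (x, t)).hasFDerivAt).comp_hasDerivAt t (lineT x t)
  have hP : ∀ x t : ℝ, yP y x t = fderiv ℝ g (x, t) (1, 0) := fun x t => (hPd x t).deriv
  have hT : ∀ x t : ℝ, yT y x t = fderiv ℝ g (x, t) (0, 1) := fun x t => (hTd x t).deriv
  -- F1 : directional derivative function
  set F1 : ℝ × ℝ → ℝ := fun p => fderiv ℝ g p (1, 0) with hF1def
  set FT : ℝ × ℝ → ℝ := fun p => fderiv ℝ g p (0, 1) with hFTdef
  have hF1 : ContDiff ℝ (⊤ : ℕ∞) F1 := hfd.clm_apply contDiff_const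
  have hFT : ContDiff ℝ (⊤ : ℕ∞) FT := hfd.clm_apply contDiff_const
  -- smoothness in the first variable
  have hline : ∀ t : ℝ, ContDiff ℝ (⊤ : ℕ∞) (fun x : ℝ => (x, t)) :=
    fun t => contDiff_id.prodMk contDiff_const
  have hu : ContDiff ℝ ∞ (fun x : ℝ => yP y x τ₀) := by
    have : (fun x : ℝ => yP y x τ₀) = fun x => F1 (x, τ₀) := funext fun x => hP x τ₀
    rw [this]
    exact (hF1.comp (hline τ₀)).of_le (by simp)
  have hw : ContDiff ℝ ∞ (fun x : ℝ => y x τ₀) := by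
    have : (fun x : ℝ => y x τ₀) = fun x => g (x, τ₀) := rfl
    rw [this]
    exact (hy.comp (hline τ₀)).of_le (by simp)
  have hv : ContDiff ℝ ∞ (fun x : ℝ => yPP y x τ₀) := by
    have : (fun x : ℝ => yPP y x τ₀) = deriv (fun x : ℝ => yP y x τ₀) := rfl
    rw [this]
    exact (contDiff_infty_iff_deriv.mp hu).2
  -- HasDerivAt facts at φ₀ with the named derivatives
  have hwD : HasDerivAt (fun x : ℝ => y x τ₀) (yP y φ₀ τ₀) φ₀ :=
    ((hw.differentiable (by norm_num)) φ₀).hasDerivAt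
  have huD : HasDerivAt (fun x : ℝ => yP y x τ₀) (yPP y φ₀ τ₀) φ₀ :=
    ((hu.differentiable (by norm_num)) φ₀).hasDerivAt
  have hvD : HasDerivAt (fun x : ℝ => yPP y x τ₀) (yPPP y φ₀ τ₀) φ₀ :=
    ((hv.differentiable (by norm_num)) φ₀).hasDerivAt
  -- derivative of the RHS of the evolution equation
  have hq : HasDerivAt (fun x : ℝ => y x τ₀ / x ^ 2)
      ((yP y φ₀ τ₀ * φ₀ ^ 2 - y φ₀ τ₀ * ((2 : ℕ) * φ₀ ^ (2 - 1))) / (φ₀ ^ 2) ^ 2) φ₀ :=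
    hwD.div (hasDerivAt_pow 2 φ₀) (pow_ne_zero 2 hφ₀.ne')
  have hR : HasDerivAt
      (fun x : ℝ => y x τ₀ * yPP y x τ₀ + (2 - x - yP y x τ₀) * yP y x τ₀
        + y x τ₀ * (1 - y x τ₀ / x ^ 2))
      ((yP y φ₀ τ₀ * yPP y φ₀ τ₀ + y φ₀ τ₀ * yPPP y φ₀ τ₀)
        + (((0 - 1) - yPP y φ₀ τ₀) * yP y φ₀ τ₀ + (2 - φ₀ - yP y φ₀ τ₀) * yPP y φ₀ τ₀)
        + (yP y φ₀ τ₀ * (1 - y φ₀ τ₀ / φ₀ ^ 2)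
          + y φ₀ τ₀ * (0 - (yP y φ₀ τ₀ * φ₀ ^ 2 - y φ₀ τ₀ * ((2 : ℕ) * φ₀ ^ (2 - 1))) / (φ₀ ^ 2) ^ 2))) φ₀ := by
    exact ((hwD.mul hvD).add
      ((((hasDerivAt_const φ₀ (2:ℝ)).sub (hasDerivAt_id φ₀)).sub huD).mul huD)).add
      (hwD.mul ((hasDerivAt_const φ₀ (1:ℝ)).sub hq))
  -- the mixed partial derivative swap
  have hsymm : IsSymmSndFDerivAt ℝ g (φ₀, τ₀) :=
    hy.contDiffAt.isSymmSndFDerivAt (by simp; exact WithTop.coe_le_coe.mpr le_top)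
  -- deriv (fun s => yP y φ₀ s) τ₀ = fderiv² (0,1) (1,0)
  have hF1fd : HasFDerivAt F1
      ((ContinuousLinearMap.apply ℝ ℝ ((1:ℝ), (0:ℝ))).comp
        (fderiv ℝ (fderiv ℝ g) (φ₀, τ₀))) (φ₀, τ₀) :=
    ((ContinuousLinearMap.apply ℝ ℝ ((1:ℝ), (0:ℝ))).hasFDerivAt).comp (φ₀, τ₀)
      (hfddiff (φ₀, τ₀)).hasFDerivAt
  have hFTfd : HasFDerivAt FT
      ((ContinuousLinearMap.apply ℝ ℝ ((0:ℝ), (1:ℝ))).comp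
        (fderiv ℝ (fderiv ℝ g) (φ₀, τ₀))) (φ₀, τ₀) :=
    ((ContinuousLinearMap.apply ℝ ℝ ((0:ℝ), (1:ℝ))).hasFDerivAt).comp (φ₀, τ₀)
      (hfddiff (φ₀, τ₀)).hasFDerivAt
  have step1 : deriv (fun s => yP y φ₀ s) τ₀
      = fderiv ℝ (fderiv ℝ g) (φ₀, τ₀) (0, 1) (1, 0) := by
    have heq : (fun s : ℝ => yP y φ₀ s) = fun s => F1 (φ₀, s) := funext fun s => hP φ₀ s
    rw [heq]
    have h := hF1fd.comp_hasDerivAt τ₀ (lineT φ₀ τ₀)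
    simpa [Function.comp_def] using h.deriv
  have step2 : deriv (fun x => yT y x τ₀) φ₀
      = fderiv ℝ (fderiv ℝ g) (φ₀, τ₀) (1, 0) (0, 1) := by
    have heq : (fun x : ℝ => yT y x τ₀) = fun x => FT (x, τ₀) := funext fun x => hT x τ₀
    rw [heq]
    have h := hFTfd.comp_hasDerivAt φ₀ (lineP τ₀ φ₀)
    simpa [Function.comp_def] using h.deriv
  have swap : deriv (fun s => yP y φ₀ s) τ₀ = deriv (fun x => yT y x τ₀) φ₀ := by
    rw [step1, step2, hsymm (0, 1) (1, 0)]
  -- evaluate via the evolution equation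
  have hev : (fun x : ℝ => yT y x τ₀) =ᶠ[nhds φ₀]
      (fun x : ℝ => y x τ₀ * yPP y x τ₀ + (2 - x - yP y x τ₀) * yP y x τ₀
        + y x τ₀ * (1 - y x τ₀ / x ^ 2)) := by
    filter_upwards [eventually_gt_nhds hφ₀] with x hx
    exact hevol x hx τ₀
  rw [swap, hev.deriv_eq, hR.deriv]
  -- final inequality
  have ha : 0 < y φ₀ τ₀ := hpos φ₀ hφ₀ τ₀
  have h2 : y φ₀ τ₀ < yP y φ₀ τ₀ * φ₀ :=
    (div_lt_iff₀ hφ₀).mp (lt_of_le_of_lt (hbd φ₀ hφ₀ τ₀) hmax)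
  have h1 : y φ₀ τ₀ * yPPP y φ₀ τ₀ ≤ 0 := mul_nonpos_of_nonneg_of_nonpos ha.le hconc
  rw [hflat]
  have hφ2 : (0:ℝ) < φ₀ ^ 2 := by positivity
  have hφ4 : (0:ℝ) < φ₀ ^ 4 := by positivity
  have key : yP y φ₀ τ₀ * (1 - y φ₀ τ₀ / φ₀ ^ 2)
      + y φ₀ τ₀ * (0 - (yP y φ₀ τ₀ * φ₀ ^ 2 - y φ₀ τ₀ * ((2 : ℕ) * φ₀ ^ (2 - 1))) / (φ₀ ^ 2) ^ 2)
      = yP y φ₀ τ₀ + 2 * y φ₀ τ₀ * (y φ₀ τ₀ - yP y φ₀ τ₀ * φ₀) / φ₀ ^ 3 := by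
    field_simp
    ring
  rw [key]
  have hneg : 2 * y φ₀ τ₀ * (y φ₀ τ₀ - yP y φ₀ τ₀ * φ₀) / φ₀ ^ 3 < 0 := by
    apply div_neg_of_neg_of_pos _ (by positivity)
    have : y φ₀ τ₀ - yP y φ₀ τ₀ * φ₀ < 0 := by linarith
    nlinarith
  nlinarith
end

section
/- Let 𝒴(φ) = (φ(φ−2) + √2(φ−1) + 1)/(√2·φ) and s(φ,τ) = −λ(τ)φ² with λ'(τ) = −δλ(τ). Then (∂_τ − ℰ)[𝒴 + s] = λ(τ)·((δ + 3λ(τ) − 1)φ² + 2(2 − √2)φ − 3(2 − √2)/φ), where ℰ[y] = y·y_{φφ} + (2 − φ − y_φ)y_φ + y(1 − y/φ²). -/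
noncomputable def Eop (y : ℝ → ℝ) (x : ℝ) : ℝ :=
  y x * deriv (deriv y) x + (2 - x - deriv y x) * deriv y x + y x * (1 - y x / x ^ 2)

/-!
Away from `0` the profile is the Laurent polynomial `√2/2 φ + (1 - √2) - (1 - √2/2)/φ`, so
`𝒴 - λ φ²` and its first two `φ`-derivatives are explicit. Substituting them into `ℰ`, and
`∂_τ (-λ φ²) = δ λ φ²`, the claim becomes a polynomial identity in `φ` and `√2` after clearing
denominators, which holds modulo `√2 ^ 2 = 2`.
-/

open Real Filter Topology

lemma Eop_eq_of_hasDerivAt {y y' : ℝ → ℝ} {y'' x : ℝ}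
    (hy : ∀ᶠ z in 𝓝 x, HasDerivAt y (y' z) z) (hy' : HasDerivAt y' y'' x) :
    Eop y x = y x * y'' + (2 - x - y' x) * y' x + y x * (1 - y x / x ^ 2) := by
  have hderiv : deriv y =ᶠ[𝓝 x] y' := hy.mono fun z hz => hz.deriv
  rw [Eop, hderiv.deriv_eq, hy'.deriv, hderiv.eq_of_nhds]

lemma Yfik_eq {x : ℝ} (hx : x ≠ 0) :
    Yfik x = √2 / 2 * x + (1 - √2) - (1 - √2 / 2) / x := by
  have hr : √2 ^ 2 = 2 := sq_sqrt zero_le_two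
  rw [Yfik]
  field_simp
  linear_combination -(x - 1) ^ 2 * hr

lemma hasDerivAt_Yfik_sub_mul_sq (c : ℝ) {x : ℝ} (hx : x ≠ 0) :
    HasDerivAt (fun z => Yfik z - c * z ^ 2)
      (√2 / 2 + (1 - √2 / 2) / x ^ 2 - 2 * c * x) x := by
  have hlin := ((hasDerivAt_id x).const_mul (√2 / 2)).add_const (1 - √2)
  have hinv := (hasDerivAt_inv hx).const_mul (1 - √2 / 2)
  have hsq := (hasDerivAt_pow 2 x).const_mul c
  refine ((hlin.sub hinv).sub hsq).congr_of_eventuallyEq ?_ |>.congr_deriv ?_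
  · filter_upwards [eventually_ne_nhds hx] with z hz
    simp [Yfik_eq hz, div_eq_mul_inv]
  · field_simp
    ring

lemma hasDerivAt_const_add_div_sq_sub_mul (a b k : ℝ) {x : ℝ} (hx : x ≠ 0) :
    HasDerivAt (fun z => a + b / z ^ 2 - k * z) (-2 * b / x ^ 3 - k) x := by
  have hinvsq := ((hasDerivAt_pow 2 x).inv (pow_ne_zero 2 hx)).const_mul b
  have hlin := (hasDerivAt_id x).const_mul k
  refine ((hinvsq.const_add a).sub hlin).congr_deriv ?_ |>.congr_of_eventuallyEq
    (.of_forall fun z => by simp [div_eq_mul_inv])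
  field_simp
  ring

theorem stmt9 (lam : ℝ → ℝ) (δ : ℝ) (hlam : Differentiable ℝ lam)
    (hode : ∀ t : ℝ, deriv lam t = -δ * lam t) :
    ∀ x : ℝ, 0 < x → ∀ t : ℝ,
      deriv (fun s => Yfik x - lam s * x ^ 2) t
          - Eop (fun z => Yfik z - lam t * z ^ 2) x =
        lam t * ((δ + 3 * lam t - 1) * x ^ 2 + 2 * (2 - Real.sqrt 2) * x
          - 3 * (2 - Real.sqrt 2) / x) := by
  intro x hx t
  have htime : HasDerivAt (fun s => Yfik x - lam s * x ^ 2) (δ * lam t * x ^ 2) t := by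
    have h := ((hlam t).hasDerivAt.mul_const (x ^ 2)).const_sub (Yfik x)
    rw [hode t] at h
    exact h.congr_deriv (by ring)
  have hspace : ∀ᶠ z in 𝓝 x, HasDerivAt (fun z => Yfik z - lam t * z ^ 2)
      (√2 / 2 + (1 - √2 / 2) / z ^ 2 - 2 * lam t * z) z :=
    (eventually_ne_nhds hx.ne').mono fun z hz => hasDerivAt_Yfik_sub_mul_sq (lam t) hz
  rw [htime.deriv, Eop_eq_of_hasDerivAt hspace
    (hasDerivAt_const_add_div_sq_sub_mul _ _ _ hx.ne'), Yfik_eq hx.ne']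
  have hr : √2 ^ 2 = 2 := sq_sqrt zero_le_two
  field_simp
  linear_combination 2 * x ^ 2 * (x - 1) ^ 2 * hr
end

section
/- For all λ₀ > 0 with λ₀ ≥ 2(2−√2), the function y₂(φ,τ) = 𝒴(φ) + λ₀e^{−τ/2}φ² satisfies (∂_τ − ℰ)[y₂] > 0 for all φ ≥ 1 and τ ≥ 0, where 𝒴(φ) = (φ(φ−2) + √2(φ−1) + 1)/(√2·φ) and ℰ[y] = y·y_{φφ} + (2 − φ − y_φ)y_φ + y(1 − y/φ²). -/
lemma hasDerivAt_barrier (L : ℝ) {x : ℝ} (hx : 0 < x) :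
    HasDerivAt (fun z => Yfik z + L * z ^ 2)
      (1 / Real.sqrt 2 - (1 - Real.sqrt 2) / (Real.sqrt 2 * x ^ 2) + 2 * L * x) x := by
  have hs : Real.sqrt 2 ≠ 0 := ne_of_gt (Real.sqrt_pos.mpr two_pos)
  have hx0 : x ≠ 0 := ne_of_gt hx
  have hu : HasDerivAt (fun z : ℝ => z * (z - 2) + Real.sqrt 2 * (z - 1) + 1)
      (1 * (x - 2) + x * 1 + Real.sqrt 2 * 1) x :=
    (((hasDerivAt_id x).mul ((hasDerivAt_id x).sub_const 2)).add
      (((hasDerivAt_id x).sub_const 1).const_mul _)).add_const 1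
  have hv : HasDerivAt (fun z : ℝ => Real.sqrt 2 * z) (Real.sqrt 2 * 1) x :=
    (hasDerivAt_id x).const_mul _
  have hq := hu.div hv (by simp [hs, hx0])
  have hp : HasDerivAt (fun z : ℝ => L * z ^ 2) (L * (↑2 * x ^ 1)) x :=
    (hasDerivAt_pow 2 x).const_mul L
  have h := hq.add hp
  refine h.congr_deriv ?_
  field_simp
  ring

lemma hasDerivAt_barrier' (L : ℝ) {x : ℝ} (hx : 0 < x) :
    HasDerivAt (fun z : ℝ => 1 / Real.sqrt 2 - (1 - Real.sqrt 2) / (Real.sqrt 2 * z ^ 2) + 2 * L * z)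
      (2 * (1 - Real.sqrt 2) / (Real.sqrt 2 * x ^ 3) + 2 * L) x := by
  have hs : Real.sqrt 2 ≠ 0 := ne_of_gt (Real.sqrt_pos.mpr two_pos)
  have hx0 : x ≠ 0 := ne_of_gt hx
  have hv : HasDerivAt (fun z : ℝ => Real.sqrt 2 * z ^ 2) (Real.sqrt 2 * (↑2 * x ^ 1)) x :=
    (hasDerivAt_pow 2 x).const_mul _
  have hq := (hasDerivAt_const x (1 - Real.sqrt 2)).div hv (by simp [hs, hx0])
  have hlin : HasDerivAt (fun z : ℝ => 2 * L * z) (2 * L * 1) x := (hasDerivAt_id x).const_mul _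
  have h := (((hasDerivAt_const x (1 / Real.sqrt 2)).sub hq).add hlin)
  refine h.congr_deriv ?_
  field_simp
  ring

lemma timederiv_barrier (lam₀ C A t : ℝ) :
    deriv (fun u => C + lam₀ * Real.exp (-u / 2) * A) t
      = lam₀ * (Real.exp (-t / 2) * (-(1 / 2))) * A := by
  have h1 : HasDerivAt (fun u : ℝ => -u / 2) (-(1 / 2)) t :=
    (by norm_num : (-(1:ℝ) / 2) = -(1 / 2)) ▸ ((hasDerivAt_id t).neg.div_const 2)
  have h2 := (Real.hasDerivAt_exp (-t / 2)).comp t h1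
  exact (((h2.const_mul lam₀).mul_const A).const_add C).deriv

lemma key_barrier (s x L : ℝ) (hs2 : s ^ 2 = 2) (hs1 : 1 ≤ s) (hx : 1 ≤ x) (hL : 0 < L) :
    0 < -(L / 2) * x ^ 2 -
      (((x * (x - 2) + s * (x - 1) + 1) / (s * x) + L * x ^ 2)
          * (2 * (1 - s) / (s * x ^ 3) + 2 * L)
        + (2 - x - (1 / s - (1 - s) / (s * x ^ 2) + 2 * L * x))
          * (1 / s - (1 - s) / (s * x ^ 2) + 2 * L * x)
        + ((x * (x - 2) + s * (x - 1) + 1) / (s * x) + L * x ^ 2)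
          * (1 - ((x * (x - 2) + s * (x - 1) + 1) / (s * x) + L * x ^ 2) / x ^ 2)) := by
  have hx0 : (0:ℝ) < x := lt_of_lt_of_le one_pos hx
  have hs0 : (0:ℝ) < s := lt_of_lt_of_le one_pos hs1
  have hsle : s ≤ 3 / 2 := by nlinarith
  have hid : -(L / 2) * x ^ 2 -
      (((x * (x - 2) + s * (x - 1) + 1) / (s * x) + L * x ^ 2)
          * (2 * (1 - s) / (s * x ^ 3) + 2 * L)
        + (2 - x - (1 / s - (1 - s) / (s * x ^ 2) + 2 * L * x))
          * (1 / s - (1 - s) / (s * x ^ 2) + 2 * L * x)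
        + ((x * (x - 2) + s * (x - 1) + 1) / (s * x) + L * x ^ 2)
          * (1 - ((x * (x - 2) + s * (x - 1) + 1) / (s * x) + L * x ^ 2) / x ^ 2))
      = L * ((1 / 2 + 3 * L) * x ^ 3 - 2 * (2 - s) * x ^ 2 + 3 * (2 - s)) / x := by
    have hxne : x ≠ 0 := ne_of_gt hx0
    have hsne : s ≠ 0 := ne_of_gt hs0
    field_simp
    linear_combination (6*L*x^3*s - 4*L*x^5*s - 2*x^2 + 4*x^3 - 2*x^4) * hs2
  rw [hid]
  have hcubic : 0 < (1 / 2 + 3 * L) * x ^ 3 - 2 * (2 - s) * x ^ 2 + 3 * (2 - s) := by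
    nlinarith [mul_pos hL (pow_pos hx0 3), sq_nonneg (x - 8 / 5), sq_nonneg (x - 1),
      mul_nonneg (sub_nonneg.mpr hx) (sq_nonneg (x - 2))]
  exact div_pos (mul_pos hL hcubic) hx0

theorem stmt11 (lam₀ : ℝ) (hlam₀ : 0 < lam₀) (hbig : 2 * (2 - Real.sqrt 2) ≤ lam₀) :
    ∀ x : ℝ, 1 ≤ x → ∀ t : ℝ, 0 ≤ t →
      0 < deriv (fun s => Yfik x + lam₀ * Real.exp (-s / 2) * x ^ 2) t
        - Eop (fun z => Yfik z + lam₀ * Real.exp (-t / 2) * z ^ 2) x := by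
  intro x hx t ht
  have hx0 : (0:ℝ) < x := lt_of_lt_of_le one_pos hx
  set L := lam₀ * Real.exp (-t / 2) with hL
  have hLpos : 0 < L := mul_pos hlam₀ (Real.exp_pos _)
  have hfun : (fun z => Yfik z + lam₀ * Real.exp (-t / 2) * z ^ 2)
      = (fun z => Yfik z + L * z ^ 2) := rfl
  have hT : deriv (fun u => Yfik x + lam₀ * Real.exp (-u / 2) * x ^ 2) t
      = lam₀ * (Real.exp (-t / 2) * (-(1 / 2))) * x ^ 2 := timederiv_barrier lam₀ _ _ t
  have hD1 : deriv (fun z => Yfik z + L * z ^ 2) x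
      = 1 / Real.sqrt 2 - (1 - Real.sqrt 2) / (Real.sqrt 2 * x ^ 2) + 2 * L * x :=
    (hasDerivAt_barrier L hx0).deriv
  have hev : deriv (fun z => Yfik z + L * z ^ 2)
      =ᶠ[nhds x] (fun z => 1 / Real.sqrt 2 - (1 - Real.sqrt 2) / (Real.sqrt 2 * z ^ 2)
        + 2 * L * z) := by
    filter_upwards [isOpen_Ioi.mem_nhds (Set.mem_Ioi.mpr hx0)] with z hz
    exact (hasDerivAt_barrier L hz).deriv
  have hD2 : deriv (deriv (fun z => Yfik z + L * z ^ 2)) x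
      = 2 * (1 - Real.sqrt 2) / (Real.sqrt 2 * x ^ 3) + 2 * L := by
    rw [hev.deriv_eq]
    exact (hasDerivAt_barrier' L hx0).deriv
  have hTval : lam₀ * (Real.exp (-t / 2) * (-(1 / 2))) * x ^ 2 = -(L / 2) * x ^ 2 := by
    rw [hL]; ring
  rw [hT, hTval, hfun, Eop, hD1, hD2]
  have hkey := key_barrier (Real.sqrt 2) x L (Real.sq_sqrt (by norm_num))
    (by nlinarith [Real.sq_sqrt (show (0:ℝ) ≤ 2 by norm_num),
      Real.sqrt_nonneg 2]) hx hLpos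
  exact hkey
end

section
/- Change of variables for the potential PDE: if φ(ρ,τ) > 0 has φ_ρ > 0 and evolves by φ_τ = φ_{ρρ}/φ_ρ + φ_ρ/φ − φ_ρ + φ − 2, and y(φ,τ) := φ_ρ(ρ(φ,τ),τ) denotes φ_ρ written as a function of the value φ (valid since φ_ρ > 0 makes ρ ↦ φ invertible at each time), then y satisfies ∂_τ y|_φ = y·y_{φφ} + (2 − φ − y_φ)y_φ + y(1 − y/φ²). -/
/-- Spatial partial derivative. -/
noncomputable def pP (φ : ℝ → ℝ → ℝ) (x t : ℝ) : ℝ := deriv (fun s => φ s t) x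
noncomputable def pPP (φ : ℝ → ℝ → ℝ) (x t : ℝ) : ℝ := deriv (fun s => pP φ s t) x
noncomputable def pT (φ : ℝ → ℝ → ℝ) (x t : ℝ) : ℝ := deriv (fun s => φ x s) t

open Function

lemma aux_fst {F : ℝ × ℝ → ℝ} (hF : ContDiff ℝ (⊤ : ℕ∞) F) (x t : ℝ) :
    HasDerivAt (fun s => F (s, t)) (fderiv ℝ F (x, t) (1, 0)) x := by
  have h1 : HasDerivAt (fun s : ℝ => (s, t)) ((1 : ℝ), (0 : ℝ)) x :=
    (hasDerivAt_id x).prodMk (hasDerivAt_const x t)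
  exact (hF.differentiable (by simp) _).hasFDerivAt.comp_hasDerivAt x h1

lemma aux_snd {F : ℝ × ℝ → ℝ} (hF : ContDiff ℝ (⊤ : ℕ∞) F) (x t : ℝ) :
    HasDerivAt (fun s => F (x, s)) (fderiv ℝ F (x, t) (0, 1)) t := by
  have h1 : HasDerivAt (fun s : ℝ => (x, s)) ((0 : ℝ), (1 : ℝ)) t :=
    (hasDerivAt_const t x).prodMk (hasDerivAt_id t)
  exact (hF.differentiable (by simp) _).hasFDerivAt.comp_hasDerivAt t h1

lemma aux_clm {F : ℝ × ℝ → ℝ} (hF : ContDiff ℝ (⊤ : ℕ∞) F) (v : ℝ × ℝ) :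
    ContDiff ℝ (⊤ : ℕ∞) (fun p => fderiv ℝ F p v) :=
  (hF.fderiv_right (by simp)).clm_apply contDiff_const

lemma aux_dapply {F : ℝ × ℝ → ℝ} (hF : ContDiff ℝ (⊤ : ℕ∞) F) (v q w : ℝ × ℝ) :
    fderiv ℝ (fun p => fderiv ℝ F p v) q w = fderiv ℝ (fderiv ℝ F) q w v := by
  have hdf : DifferentiableAt ℝ (fderiv ℝ F) q :=
    ((hF.fderiv_right (m := (⊤ : ℕ∞)) (by simp)).differentiable (by simp)) q
  have h : HasFDerivAt (fun p => fderiv ℝ F p v)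
      ((ContinuousLinearMap.apply ℝ ℝ v).comp (fderiv ℝ (fderiv ℝ F) q)) q :=
    (ContinuousLinearMap.apply ℝ ℝ v).hasFDerivAt.comp q hdf.hasFDerivAt
  rw [h.fderiv]; rfl

lemma aux_symm {F : ℝ × ℝ → ℝ} (hF : ContDiff ℝ (⊤ : ℕ∞) F) (q v w : ℝ × ℝ) :
    fderiv ℝ (fderiv ℝ F) q v w = fderiv ℝ (fderiv ℝ F) q w v :=
  second_derivative_symmetric (fun y => ((hF.differentiable (by simp)) y).hasFDerivAt)
    (((hF.fderiv_right (m := (⊤ : ℕ∞)) (by simp)).differentiable (by simp) q).hasFDerivAt) v w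

lemma pP_eq {g : ℝ → ℝ → ℝ} (hg : ContDiff ℝ (⊤ : ℕ∞) (uncurry g)) (x t : ℝ) :
    pP g x t = fderiv ℝ (uncurry g) (x, t) (1, 0) := (aux_fst hg x t).deriv

lemma pT_eq {g : ℝ → ℝ → ℝ} (hg : ContDiff ℝ (⊤ : ℕ∞) (uncurry g)) (x t : ℝ) :
    pT g x t = fderiv ℝ (uncurry g) (x, t) (0, 1) := (aux_snd hg x t).deriv

lemma pPP_eq {g : ℝ → ℝ → ℝ} (hg : ContDiff ℝ (⊤ : ℕ∞) (uncurry g)) (x t : ℝ) :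
    pPP g x t = fderiv ℝ (fun p => fderiv ℝ (uncurry g) p (1, 0)) (x, t) (1, 0) := by
  have h : (fun s => pP g s t) = fun s => fderiv ℝ (uncurry g) (s, t) (1, 0) :=
    funext fun s => pP_eq hg s t
  rw [pPP, h]
  exact (aux_fst (aux_clm hg (1, 0)) x t).deriv

lemma hasDerivAt_P {g : ℝ → ℝ → ℝ} (hg : ContDiff ℝ (⊤ : ℕ∞) (uncurry g)) (x t : ℝ) :
    HasDerivAt (fun s => g s t) (pP g x t) x := by
  rw [pP_eq hg]; exact aux_fst hg x t

lemma hasDerivAt_T {g : ℝ → ℝ → ℝ} (hg : ContDiff ℝ (⊤ : ℕ∞) (uncurry g)) (x t : ℝ) :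
    HasDerivAt (fun s => g x s) (pT g x t) t := by
  rw [pT_eq hg]; exact aux_snd hg x t

lemma hasDerivAt_PP {g : ℝ → ℝ → ℝ} (hg : ContDiff ℝ (⊤ : ℕ∞) (uncurry g)) (x t : ℝ) :
    HasDerivAt (fun s => pP g s t) (pPP g x t) x := by
  have h : (fun s => pP g s t) = fun s => fderiv ℝ (uncurry g) (s, t) (1, 0) :=
    funext fun s => pP_eq hg s t
  rw [pPP_eq hg, h]
  exact aux_fst (aux_clm hg (1, 0)) x t

lemma hasDerivAt_PPP {g : ℝ → ℝ → ℝ} (hg : ContDiff ℝ (⊤ : ℕ∞) (uncurry g)) (x t : ℝ) :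
    HasDerivAt (fun r => pPP g r t)
      (fderiv ℝ (fun p => fderiv ℝ (fun q => fderiv ℝ (uncurry g) q (1, 0)) p (1, 0)) (x, t)
        (1, 0)) x := by
  have h : (fun r => pPP g r t) =
      fun r => fderiv ℝ (fun q => fderiv ℝ (uncurry g) q (1, 0)) (r, t) (1, 0) :=
    funext fun r => pPP_eq hg r t
  rw [h]
  exact aux_fst (aux_clm (aux_clm hg (1, 0)) (1, 0)) x t

/-- Clairaut for the partial derivative notations. -/
lemma mixed_eq {g : ℝ → ℝ → ℝ} (hg : ContDiff ℝ (⊤ : ℕ∞) (uncurry g)) (x t : ℝ) :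
    deriv (fun s => pP g x s) t = deriv (fun r => pT g r t) x := by
  have h1 : (fun s => pP g x s) = fun s => fderiv ℝ (uncurry g) (x, s) (1, 0) :=
    funext fun s => pP_eq hg x s
  have h2 : (fun r => pT g r t) = fun r => fderiv ℝ (uncurry g) (r, t) (0, 1) :=
    funext fun r => pT_eq hg r t
  rw [h1, h2, (aux_snd (aux_clm hg (1, 0)) x t).deriv, (aux_fst (aux_clm hg (0, 1)) x t).deriv,
    aux_dapply hg (1, 0) (x, t) (0, 1), aux_dapply hg (0, 1) (x, t) (1, 0)]
  exact aux_symm hg (x, t) (0, 1) (1, 0)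

theorem stmt18 (φ y : ℝ → ℝ → ℝ)
    (hφ : ContDiff ℝ (⊤ : ℕ∞) (Function.uncurry φ))
    (hy : ContDiff ℝ (⊤ : ℕ∞) (Function.uncurry y))
    (hpos : ∀ ρ τ : ℝ, 0 < φ ρ τ)
    (hinc : ∀ ρ τ : ℝ, 0 < pP φ ρ τ)
    (hevol : ∀ ρ τ : ℝ, pT φ ρ τ =
      pPP φ ρ τ / pP φ ρ τ + pP φ ρ τ / φ ρ τ - pP φ ρ τ + φ ρ τ - 2)
    (hrel : ∀ ρ τ : ℝ, y (φ ρ τ) τ = pP φ ρ τ) :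
    ∀ ρ τ : ℝ,
      deriv (fun s => y (φ ρ τ) s) τ =
        y (φ ρ τ) τ * pPP y (φ ρ τ) τ
          + (2 - φ ρ τ - pP y (φ ρ τ) τ) * pP y (φ ρ τ) τ
          + y (φ ρ τ) τ * (1 - y (φ ρ τ) τ / (φ ρ τ) ^ 2) := by
  intro ρ τ
  set p : ℝ := φ ρ τ with hp
  set a : ℝ := pP φ ρ τ with ha
  set b : ℝ := pPP φ ρ τ with hb
  set c : ℝ := fderiv ℝ
      (fun q => fderiv ℝ (fun q' => fderiv ℝ (Function.uncurry φ) q' (1, 0)) q (1, 0)) (ρ, τ)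
      (1, 0) with hc
  have hane : a ≠ 0 := (hinc ρ τ).ne'
  have hpne : p ≠ 0 := (hpos ρ τ).ne'
  set yφ : ℝ := pP y p τ with hyφ
  set yφφ : ℝ := pPP y p τ with hyφφ
  -- first relation: y_φ(φ) * φ_ρ = φ_ρρ, for all r
  have rel1 : ∀ r : ℝ, pP y (φ r τ) τ * pP φ r τ = pPP φ r τ := by
    intro r
    have h1 : HasDerivAt (fun r => y (φ r τ) τ) (pP y (φ r τ) τ * pP φ r τ) r :=
      by have := (hasDerivAt_P hy (φ r τ) τ).comp r (hasDerivAt_P hφ r τ); exact this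
    have h2 : HasDerivAt (fun r => y (φ r τ) τ) (pPP φ r τ) r := by
      have h3 := hasDerivAt_PP hφ r τ
      have h4 : (fun r => pP φ r τ) = fun r => y (φ r τ) τ := funext fun r => (hrel r τ).symm
      rwa [h4] at h3
    exact h1.unique h2
  have rel1' : yφ * a = b := rel1 ρ
  -- second relation: y_φφ a² + y_φ b = c
  have rel2 : yφφ * a * a + yφ * b = c := by
    have h1 : HasDerivAt (fun r => pP y (φ r τ) τ) (yφφ * a) ρ :=
      (hasDerivAt_PP hy p τ).comp ρ (hasDerivAt_P hφ ρ τ)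
    have h2 : HasDerivAt (fun r => pP y (φ r τ) τ * pP φ r τ) (yφφ * a * a + yφ * b) ρ :=
      h1.mul (hasDerivAt_PP hφ ρ τ)
    have h3 : HasDerivAt (fun r => pP y (φ r τ) τ * pP φ r τ) c ρ := by
      have h4 := hasDerivAt_PPP hφ ρ τ
      have h5 : (fun r => pPP φ r τ) = fun r => pP y (φ r τ) τ * pP φ r τ :=
        funext fun r => (rel1 r).symm
      rwa [h5, ← hc] at h4
    exact h2.unique h3
  -- derivative in ρ of the evolution RHS
  set D : ℝ := (c * a - b * b) / a ^ 2 + (b * p - a * a) / p ^ 2 - b + a with hD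
  have hDd : HasDerivAt (fun r => pT φ r τ) D ρ := by
    have h1 : HasDerivAt
        (fun r => pPP φ r τ / pP φ r τ + pP φ r τ / φ r τ - pP φ r τ + φ r τ - 2) D ρ := by
      have hd1 : HasDerivAt (fun r => pPP φ r τ / pP φ r τ) ((c * a - b * b) / a ^ 2) ρ := by
        have := hasDerivAt_PPP hφ ρ τ
        rw [← hc] at this
        exact this.div (hasDerivAt_PP hφ ρ τ) hane
      have hd2 : HasDerivAt (fun r => pP φ r τ / φ r τ) ((b * p - a * a) / p ^ 2) ρ :=
        (hasDerivAt_PP hφ ρ τ).div (hasDerivAt_P hφ ρ τ) hpne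
      exact (((hd1.add hd2).sub (hasDerivAt_PP hφ ρ τ)).add (hasDerivAt_P hφ ρ τ)).sub_const 2
    have h2 : (fun r => pPP φ r τ / pP φ r τ + pP φ r τ / φ r τ - pP φ r τ + φ r τ - 2) =
        fun r => pT φ r τ := funext fun r => (hevol r τ).symm
    rwa [h2] at h1
  -- deriv in τ of s ↦ pP φ ρ s equals D (Clairaut)
  have hmix : deriv (fun s => pP φ ρ s) τ = D := by
    rw [mixed_eq hφ ρ τ]; exact hDd.deriv
  -- chain rule for s ↦ y (φ ρ s) s
  set e : ℝ := pT φ ρ τ with he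
  have hchain : HasDerivAt (fun s => y (φ ρ s) s)
      (fderiv ℝ (Function.uncurry y) (p, τ) (e, 1)) τ := by
    have hcurve : HasDerivAt (fun s : ℝ => (φ ρ s, s)) (e, 1) τ :=
      (hasDerivAt_T hφ ρ τ).prodMk (hasDerivAt_id τ)
    exact (hy.differentiable (by simp) _).hasFDerivAt.comp_hasDerivAt τ hcurve
  have hsplit : fderiv ℝ (Function.uncurry y) (p, τ) (e, 1) =
      e * yφ + deriv (fun s => y p s) τ := by
    have hv : ((e, (1 : ℝ)) : ℝ × ℝ) = e • ((1 : ℝ), (0 : ℝ)) + ((0 : ℝ), (1 : ℝ)) := by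
      simp [Prod.ext_iff]
    rw [hv, map_add, map_smul, smul_eq_mul, hyφ, pP_eq hy]
    congr 1
    have : deriv (fun s => y p s) τ = pT y p τ := rfl
    rw [this, pT_eq hy]
  have hfun : (fun s => y (φ ρ s) s) = fun s => pP φ ρ s := funext fun s => hrel ρ s
  have hkey : e * yφ + deriv (fun s => y p s) τ = D := by
    rw [← hsplit, ← hchain.deriv, hfun, hmix]
  -- final algebra
  have hev : e = b / a + a / p - a + p - 2 := hevol ρ τ
  rw [hrel ρ τ, ← ha]
  have hgoal : deriv (fun s => y p s) τ = D - e * yφ := by linarith [hkey]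
  rw [hgoal, hev, hD]
  have h1 : yφ = b / a := by rw [eq_div_iff hane]; exact rel1'
  have h2 : yφφ = (c - yφ * b) / (a * a) := by
    rw [eq_div_iff (mul_ne_zero hane hane)]; linarith [rel2]
  rw [h1, h2, h1]
  field_simp
  ring
end
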